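/- In a pre-Courant algebroid, the Jacobiator 𝒥 of the skew-symmetrized bracket [e₁,e₂] = (1/2)(e₁∘e₂ − e₂∘e₁) satisfies 𝒥(e₁,e₂,e₃) = J(e₁,e₂,e₃) − D T(e₁,e₂,e₃), where 𝒥(e₁,e₂,e₃) = [[e₁,[e₂,e₃]] + [e₃,[e₁,e₂]] + [e₂,[e₃,e₁]] and T(e₁,e₂,e₃) = (1/6)(⟨[e₁,e₂],e₃⟩ + ⟨[e₂,e₃],e₁⟩ + ⟨[e₃,e₁],e₂⟩). -/
import Mathlib


/-- Algebraic model of a pre-Courant algebroid: `R` plays the role of the ring of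
smooth functions `C^∞(M)`, `E` the space of sections `Γ(E)`, vector fields are
modelled by derivations of `R`. -/
structure PreCourantAlgebroid (R : Type*) [CommRing R] [Algebra ℚ R]
    (E : Type*) [AddCommGroup E] [Module R E] where
  /-- the fibrewise pseudo-metric `⟨·,·⟩` -/
  pair : E →ₗ[R] E →ₗ[R] R
  pair_symm : ∀ e₁ e₂ : E, pair e₁ e₂ = pair e₂ e₁
  pair_nondeg : ∀ e : E, (∀ e' : E, pair e e' = 0) → e = 0
  /-- the anchor `ρ : E → TM` -/
  anchor : E →ₗ[R] Derivation ℚ R R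
  /-- `ρ ∘ ρ* = 0`, i.e. `Ker ρ` is coisotropic: `(Ker ρ)^⊥ ⊆ Ker ρ` -/
  coiso : ∀ e : E, (∀ κ : E, anchor κ = 0 → pair e κ = 0) → anchor e = 0
  /-- the operator `D : C^∞(M) → Γ(E)` -/
  D : R → E
  pair_D : ∀ (f : R) (e : E), pair (D f) e = anchor e f
  /-- the Dorfman-type operation `∘` -/
  op : E → E → E
  op_add_left : ∀ e₁ e₂ e₃ : E, op (e₁ + e₂) e₃ = op e₁ e₃ + op e₂ e₃
  op_add_right : ∀ e₁ e₂ e₃ : E, op e₁ (e₂ + e₃) = op e₁ e₂ + op e₁ e₃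
  /-- Axiom (i) -/
  anchor_op : ∀ e₁ e₂ : E, anchor (op e₁ e₂) = ⁅anchor e₁, anchor e₂⁆
  /-- Axiom (ii) -/
  ax2 : ∀ e₁ e₂ : E, pair (op e₁ e₁) e₂ = (2⁻¹ : ℚ) • (anchor e₂ (pair e₁ e₁))
  /-- Axiom (iii) -/
  ax3 : ∀ e₁ e₂ e₃ : E,
    anchor e₁ (pair e₂ e₃) = pair (op e₁ e₂) e₃ + pair e₂ (op e₁ e₃)

/-- The Jacobiator of a pre-Courant algebroid. -/
def PreCourantAlgebroid.Jac {R : Type*} [CommRing R] [Algebra ℚ R]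
    {E : Type*} [AddCommGroup E] [Module R E]
    (P : PreCourantAlgebroid R E) (e₁ e₂ e₃ : E) : E :=
  P.op e₁ (P.op e₂ e₃) - P.op (P.op e₁ e₂) e₃ - P.op e₂ (P.op e₁ e₃)


variable {R : Type*} [CommRing R] [Algebra ℚ R]
variable {E : Type*} [AddCommGroup E] [Module R E]

/-- The skew-symmetrized bracket of a pre-Courant algebroid. -/
def PreCourantAlgebroid.skewBr (P : PreCourantAlgebroid R E) (e₁ e₂ : E) : E :=
  (algebraMap ℚ R (2⁻¹ : ℚ)) • (P.op e₁ e₂ - P.op e₂ e₁)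


namespace PreCourantAlgebroid

variable (P : PreCourantAlgebroid R E)

lemma pair_ext {x y : E} (h : ∀ κ, P.pair x κ = P.pair y κ) : x = y := by
  have h0 := P.pair_nondeg (x - y) (fun κ => by simp [h κ])
  exact sub_eq_zero.mp h0

lemma D_add (f g : R) : P.D (f + g) = P.D f + P.D g := by
  apply P.pair_ext
  intro κ
  simp [P.pair_D, map_add]

lemma D_qsmul (q : ℚ) (f : R) :
    P.D (q • f) = algebraMap ℚ R q • P.D f := by
  apply P.pair_ext
  intro κ
  simp [P.pair_D, Algebra.smul_def, map_smul]

lemma pair_D' (f : R) (e : E) : P.pair e (P.D f) = P.anchor e f := by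
  rw [P.pair_symm, P.pair_D]

lemma anchor_D (f : R) : P.anchor (P.D f) = 0 :=
  P.coiso _ fun κ hκ => by rw [P.pair_D, hκ]; rfl

lemma op_self (e : E) :
    P.op e e = algebraMap ℚ R (2⁻¹ : ℚ) • P.D (P.pair e e) := by
  apply P.pair_ext
  intro κ
  rw [P.ax2]
  simp [P.pair_D, Algebra.smul_def]

lemma half_smul (x : E) : algebraMap ℚ R (2⁻¹ : ℚ) • (x + x) = x := by
  rw [smul_add, ← add_smul, ← map_add]
  norm_num

lemma op_symm (a b : E) : P.op a b + P.op b a = P.D (P.pair a b) := by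
  have hpair : P.pair (a+b) (a+b)
      = P.pair a a + (P.pair a b + P.pair a b) + P.pair b b := by
    simp only [map_add, LinearMap.add_apply]
    rw [P.pair_symm b a]
    ring
  have h := P.op_self (a + b)
  rw [P.op_add_left, P.op_add_right, P.op_add_right, hpair, P.D_add, P.D_add, P.D_add,
    smul_add, smul_add, half_smul] at h
  linear_combination (norm := module) h - P.op_self a - P.op_self b

lemma op_sub_right (e a b : E) : P.op e (a - b) = P.op e a - P.op e b := by
  have h := P.op_add_right e (a - b) b
  rw [sub_add_cancel] at h
  rw [h]
  abel

lemma op_D_right (e : E) (f : R) : P.op e (P.D f) = P.D (P.anchor e f) := by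
  apply P.pair_ext
  intro κ
  have h3 := P.ax3 e (P.D f) κ
  rw [P.pair_D] at h3
  rw [P.pair_D f (P.op e κ), P.anchor_op, Derivation.commutator_apply] at h3
  rw [P.pair_D (P.anchor e f) κ]
  linear_combination -h3

lemma skewBr_eq (a b : E) :
    P.skewBr a b = P.op a b - P.D ((2⁻¹ : ℚ) • P.pair a b) := by
  have h : P.op b a = P.D (P.pair a b) - P.op a b := by
    rw [← P.op_symm a b]; abel
  rw [skewBr, h, P.D_qsmul,
    show P.op a b - (P.D (P.pair a b) - P.op a b)
      = (P.op a b + P.op a b) - P.D (P.pair a b) from by abel,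
    smul_sub, half_smul]

lemma skew_nested (x y z : E) :
    P.skewBr x (P.skewBr y z)
      = P.op x (P.op y z)
        - P.D ((2⁻¹ : ℚ) • P.anchor x (P.pair y z)
            + (2⁻¹ : ℚ) • (P.pair x (P.op y z)
              - (2⁻¹ : ℚ) • P.anchor x (P.pair y z))) := by
  rw [P.skewBr_eq x (P.skewBr y z), P.skewBr_eq y z, P.op_sub_right, P.op_D_right,
    map_sub, P.pair_D']
  simp only [Derivation.map_smul]
  rw [P.D_add]
  abel

lemma jac_eq (e₁ e₂ e₃ : E) :
    P.Jac e₁ e₂ e₃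
      = P.op e₁ (P.op e₂ e₃) + P.op e₃ (P.op e₁ e₂) + P.op e₂ (P.op e₃ e₁)
        - P.D (P.pair (P.op e₁ e₂) e₃ + P.anchor e₂ (P.pair e₁ e₃)) := by
  have h1 : P.op (P.op e₁ e₂) e₃
      = P.D (P.pair (P.op e₁ e₂) e₃) - P.op e₃ (P.op e₁ e₂) := by
    rw [← P.op_symm (P.op e₁ e₂) e₃]; abel
  have h2 : P.op e₁ e₃ = P.D (P.pair e₁ e₃) - P.op e₃ e₁ := by
    rw [← P.op_symm e₁ e₃]; abel
  rw [Jac, h1, h2, P.op_sub_right, P.op_D_right, P.D_add]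
  abel

lemma pair_op_rel (a b z : E) :
    P.pair (P.op a b) z + P.pair (P.op b a) z
      = P.pair (P.op z a) b + P.pair (P.op z b) a := by
  have h : P.pair (P.op a b) z + P.pair (P.op b a) z
      = P.anchor z (P.pair a b) := by
    rw [← P.pair_D, ← P.op_symm a b, map_add, LinearMap.add_apply]
  rw [h, P.ax3 z a b, P.pair_symm a (P.op z b)]

end PreCourantAlgebroid

/-- The Jacobiator `𝒥` of the skew-symmetrized bracket satisfies
`𝒥 = J − D T`, where `T(e₁,e₂,e₃) = (1/6)(⟨[e₁,e₂],e₃⟩ + c.p.)`. -/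
theorem preCourant_skew_Jacobiator (P : PreCourantAlgebroid R E) (e₁ e₂ e₃ : E) :
    P.skewBr e₁ (P.skewBr e₂ e₃) + P.skewBr e₃ (P.skewBr e₁ e₂)
      + P.skewBr e₂ (P.skewBr e₃ e₁)
    = P.Jac e₁ e₂ e₃
      - P.D ((6⁻¹ : ℚ) • (P.pair (P.skewBr e₁ e₂) e₃
          + P.pair (P.skewBr e₂ e₃) e₁ + P.pair (P.skewBr e₃ e₁) e₂)) := by
  rw [P.skew_nested e₁ e₂ e₃, P.skew_nested e₃ e₁ e₂, P.skew_nested e₂ e₃ e₁, P.jac_eq,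
    P.skewBr_eq e₁ e₂, P.skewBr_eq e₂ e₃, P.skewBr_eq e₃ e₁]
  simp only [map_sub, LinearMap.sub_apply, P.pair_D, Derivation.map_smul]
  have hsym : ∀ a b c : E, P.pair a (P.op b c) = P.pair (P.op b c) a :=
    fun a b c => P.pair_symm _ _
  have key :
      ((2⁻¹:ℚ) • P.anchor e₁ (P.pair e₂ e₃)
          + (2⁻¹:ℚ) • (P.pair e₁ (P.op e₂ e₃) - (2⁻¹:ℚ) • P.anchor e₁ (P.pair e₂ e₃)))
        + ((2⁻¹:ℚ) • P.anchor e₃ (P.pair e₁ e₂)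
          + (2⁻¹:ℚ) • (P.pair e₃ (P.op e₁ e₂) - (2⁻¹:ℚ) • P.anchor e₃ (P.pair e₁ e₂)))
        + ((2⁻¹:ℚ) • P.anchor e₂ (P.pair e₃ e₁)
          + (2⁻¹:ℚ) • (P.pair e₂ (P.op e₃ e₁) - (2⁻¹:ℚ) • P.anchor e₂ (P.pair e₃ e₁)))
      = (P.pair (P.op e₁ e₂) e₃ + P.anchor e₂ (P.pair e₁ e₃))
        + (6⁻¹:ℚ) • (P.pair (P.op e₁ e₂) e₃ - (2⁻¹:ℚ) • P.anchor e₃ (P.pair e₁ e₂)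
            + (P.pair (P.op e₂ e₃) e₁ - (2⁻¹:ℚ) • P.anchor e₁ (P.pair e₂ e₃))
            + (P.pair (P.op e₃ e₁) e₂ - (2⁻¹:ℚ) • P.anchor e₂ (P.pair e₃ e₁))) := by
    simp only [P.ax3, hsym]
    linear_combination (norm := module)
      (-(3⁻¹:ℚ)) • P.pair_op_rel e₁ e₂ e₃ + (3⁻¹:ℚ) • P.pair_op_rel e₁ e₃ e₂
  have hD := congrArg P.D key
  have h1 : P.D ((2⁻¹:ℚ) • P.anchor e₁ (P.pair e₂ e₃)
          + (2⁻¹:ℚ) • (P.pair e₁ (P.op e₂ e₃) - (2⁻¹:ℚ) • P.anchor e₁ (P.pair e₂ e₃))) + P.D ((2⁻¹:ℚ) • P.anchor e₃ (P.pair e₁ e₂)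
          + (2⁻¹:ℚ) • (P.pair e₃ (P.op e₁ e₂) - (2⁻¹:ℚ) • P.anchor e₃ (P.pair e₁ e₂))) + P.D ((2⁻¹:ℚ) • P.anchor e₂ (P.pair e₃ e₁)
          + (2⁻¹:ℚ) • (P.pair e₂ (P.op e₃ e₁) - (2⁻¹:ℚ) • P.anchor e₂ (P.pair e₃ e₁)))
      = P.D (((2⁻¹:ℚ) • P.anchor e₁ (P.pair e₂ e₃)
          + (2⁻¹:ℚ) • (P.pair e₁ (P.op e₂ e₃) - (2⁻¹:ℚ) • P.anchor e₁ (P.pair e₂ e₃)))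
        + ((2⁻¹:ℚ) • P.anchor e₃ (P.pair e₁ e₂)
          + (2⁻¹:ℚ) • (P.pair e₃ (P.op e₁ e₂) - (2⁻¹:ℚ) • P.anchor e₃ (P.pair e₁ e₂)))
        + ((2⁻¹:ℚ) • P.anchor e₂ (P.pair e₃ e₁)
          + (2⁻¹:ℚ) • (P.pair e₂ (P.op e₃ e₁) - (2⁻¹:ℚ) • P.anchor e₂ (P.pair e₃ e₁)))) := by
    rw [← P.D_add, ← P.D_add]
  have h2 : P.D (P.pair (P.op e₁ e₂) e₃ + P.anchor e₂ (P.pair e₁ e₃)) + P.D ((6⁻¹:ℚ) • (P.pair (P.op e₁ e₂) e₃ - (2⁻¹:ℚ) • P.anchor e₃ (P.pair e₁ e₂)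
            + (P.pair (P.op e₂ e₃) e₁ - (2⁻¹:ℚ) • P.anchor e₁ (P.pair e₂ e₃))
            + (P.pair (P.op e₃ e₁) e₂ - (2⁻¹:ℚ) • P.anchor e₂ (P.pair e₃ e₁))))
      = P.D ((P.pair (P.op e₁ e₂) e₃ + P.anchor e₂ (P.pair e₁ e₃)) + ((6⁻¹:ℚ) • (P.pair (P.op e₁ e₂) e₃ - (2⁻¹:ℚ) • P.anchor e₃ (P.pair e₁ e₂)
            + (P.pair (P.op e₂ e₃) e₁ - (2⁻¹:ℚ) • P.anchor e₁ (P.pair e₂ e₃))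
            + (P.pair (P.op e₃ e₁) e₂ - (2⁻¹:ℚ) • P.anchor e₂ (P.pair e₃ e₁))))) := by
    rw [← P.D_add]
  linear_combination (norm := module) h2 - h1 - hD
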